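/- Let s ≥ 1 and u ∈ [0,1]. Then for every x ∈ (0,1), the derivative of h_{u,s} at x equals (x² / ((1-x²)·(1-u·x²)²)) · T_{u,s}(x²), where T_{u,s}(X) = (1-s)·u²·X² - (2 - 3s - s·u)·u·X + (1 - 3·s·u). -/

import Mathlib

noncomputable def A (a b : ℝ) : ℝ := (a + b) / 2

noncomputable def G (a b : ℝ) : ℝ := Real.sqrt (a * b)

noncomputable def H (a b : ℝ) : ℝ := 2 * a * b / (a + b)

noncomputable def I (a b : ℝ) : ℝ :=
  (1 / Real.exp 1) * (a ^ a / b ^ b) ^ (1 / (a - b))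

noncomputable def Q (t s a b : ℝ) : ℝ :=
  G (t * a + (1 - t) * b) (t * b + (1 - t) * a) ^ s * A a b ^ (1 - s)

noncomputable def f (u s x : ℝ) : ℝ :=
  1 - (1 / (2 * x)) * Real.log ((1 + x) / (1 - x))
    - (1 / 2) * Real.log (1 - x ^ 2) + (s / 2) * Real.log (1 - u * x ^ 2)

noncomputable def h (u s x : ℝ) : ℝ :=
  -x + (1 / 2) * Real.log ((1 + x) / (1 - x)) - s * u * x ^ 3 / (1 - u * x ^ 2)

noncomputable def T (u s X : ℝ) : ℝ :=
  (1 - s) * u^2 * X^2 - (2 - 3*s - s*u) * u * X + (1 - 3*s*u)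

theorem hasDerivAt_half_log_one_add_div_one_sub {x : ℝ} (hx₁ : 1 + x ≠ 0) (hx₂ : 1 - x ≠ 0) :
    HasDerivAt (fun x : ℝ => (1 / 2) * Real.log ((1 + x) / (1 - x))) (1 / (1 - x ^ 2)) x := by
  have hq : HasDerivAt (fun x : ℝ => (1 + x) / (1 - x)) ((1 * (1 - x) - (1 + x) * (-1)) / (1 - x) ^ 2) x :=
    ((hasDerivAt_id x).const_add 1).div ((hasDerivAt_id x).neg.const_add 1) hx₂
  refine ((hq.log (div_ne_zero hx₁ hx₂)).const_mul (1 / 2 : ℝ)).congr_deriv ?_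
  rw [show 1 - x ^ 2 = (1 + x) * (1 - x) by ring]
  field_simp
  ring

theorem hasDerivAt_mul_pow_three_div_one_sub_mul_sq (c u : ℝ) {x : ℝ} (hx : 1 - u * x ^ 2 ≠ 0) :
    HasDerivAt (fun x : ℝ => c * x ^ 3 / (1 - u * x ^ 2))
      (c * x ^ 2 * (3 - u * x ^ 2) / (1 - u * x ^ 2) ^ 2) x := by
  have hnum : HasDerivAt (fun x : ℝ => c * x ^ 3) (c * (3 * x ^ 2)) x := by
    simpa using (hasDerivAt_pow 3 x).const_mul c
  have hden : HasDerivAt (fun x : ℝ => 1 - u * x ^ 2) (-(u * (2 * x))) x := by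
    simpa using ((hasDerivAt_pow 2 x).const_mul u).const_sub 1
  refine (hnum.div hden hx).congr_deriv ?_
  ring

theorem hasDerivAt_h (u s : ℝ) {x : ℝ} (hx₁ : 1 + x ≠ 0) (hx₂ : 1 - x ≠ 0)
    (hux : 1 - u * x ^ 2 ≠ 0) :
    HasDerivAt (h u s)
      (-1 + 1 / (1 - x ^ 2) - s * u * x ^ 2 * (3 - u * x ^ 2) / (1 - u * x ^ 2) ^ 2) x :=
  ((hasDerivAt_id x).neg.add (hasDerivAt_half_log_one_add_div_one_sub hx₁ hx₂)).sub
    (hasDerivAt_mul_pow_three_div_one_sub_mul_sq (s * u) u hux)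

theorem h_derivative_eq_mul_T (u s : ℝ) {x : ℝ} (hx : 1 - x ^ 2 ≠ 0) (hux : 1 - u * x ^ 2 ≠ 0) :
    -1 + 1 / (1 - x ^ 2) - s * u * x ^ 2 * (3 - u * x ^ 2) / (1 - u * x ^ 2) ^ 2
      = x ^ 2 / ((1 - x ^ 2) * (1 - u * x ^ 2) ^ 2) * T u s (x ^ 2) := by
  -- `field_simp` writes the denominator as `1 - x ^ 2 * u` and only cancels it in that form
  rw [mul_comm u] at hux ⊢
  unfold T
  field_simp
  ring

theorem stmt_14_general (s u : ℝ) (hu : u ∈ Set.Icc (0:ℝ) 1) :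
    ∀ x ∈ Set.Ioo (0:ℝ) 1,
      HasDerivAt (h u s) (x^2 / ((1 - x^2) * (1 - u*x^2)^2) * T u s (x^2)) x := by
  rintro x ⟨hx₀, hx₁⟩
  have hx_sq : 0 < 1 - x ^ 2 := by nlinarith
  have hux : 1 - u * x ^ 2 ≠ 0 := by nlinarith [hu.1, hu.2]
  rw [← h_derivative_eq_mul_T u s hx_sq.ne' hux]
  exact hasDerivAt_h u s (by linarith) (by linarith) hux

theorem stmt_14 (s u : ℝ) (hs : 1 ≤ s) (hu : u ∈ Set.Icc (0:ℝ) 1) :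
    ∀ x ∈ Set.Ioo (0:ℝ) 1,
      HasDerivAt (h u s) (x^2 / ((1 - x^2) * (1 - u*x^2)^2) * T u s (x^2)) x :=
  stmt_14_general s u hu
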